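/- Let L = T be the translation family { t ↦ t + c : c ∈ ℝ }, and let μ be a Borel probability measure on ℝ. For any κ ∈ (0, 1/2), ε > 0 with κ + ε < 1/2, and r > 0: setting f := id - Lm(μ) (so Lm(f_*μ) = 0), we have min{r, pd(μ; 1-(κ+ε))} ≤ pd((b_r)_* f_* μ; 1-κ) + 2ε. In particular, T is extractable on (0, 1/2) with extraction estimate φ(κ, r) = r. -/

import Mathlib

open MeasureTheory Set
open scoped ENNReal

/-- The `α`-partial diameter of a Borel measure on `ℝ`. -/
noncomputable def partialDiam (μ : Measure ℝ) (α : ℝ) : ℝ≥0∞ :=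
  ⨅ I ∈ {I : Set ℝ | MeasurableSet I ∧ ENNReal.ofReal α ≤ μ I}, EMetric.diam I

/-- The Lévy mean `Lm(μ) = inf { m : μ((-∞, m]) ≥ 1/2 }`. -/
noncomputable def levyMean (μ : Measure ℝ) : ℝ :=
  sInf {m : ℝ | ENNReal.ofReal (1 / 2) ≤ μ (Set.Iic m)}

/-- The clipping function `b_r(t) = max (-r) (min t r)`. -/
def clip (r t : ℝ) : ℝ := max (-r) (min t r)

/-! The Lévy mean `m` of `μ` is a median: both open half-lines at `m` have mass at most `1/2`.
Let `ν` be `μ` translated by `-m`. If the clipped measure `(b_r)_* ν` has `(1-κ)`-partial diameter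
less than `r`, nearly optimal sets `I` for it have diameter less than `r`, so they contain neither
`r` nor `-r`: otherwise `b_r⁻¹ I` would lie in an open half-line at `0`, whose `ν`-mass is at most
`1/2 < 1-κ`. Hence `b_r⁻¹ I ⊆ I`, so `I` is admissible for `ν`, and the partial diameter of `ν`,
which equals that of `μ`, is at most that of `(b_r)_* ν`. -/

open Filter ProbabilityTheory

section LevyMean

variable (μ : Measure ℝ)

lemma nonempty_cdf_ge_half : {m | 1 / 2 ≤ cdf μ m}.Nonempty :=
  ((tendsto_cdf_atTop μ).eventually_const_le (by norm_num : (1 / 2 : ℝ) < 1)).exists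

lemma bddBelow_cdf_ge_half : BddBelow {m | 1 / 2 ≤ cdf μ m} := by
  obtain ⟨a, ha⟩ := ((tendsto_cdf_atBot μ).eventually_lt_const
    (by norm_num : (0 : ℝ) < 1 / 2)).exists_forall_of_atBot
  exact ⟨a, fun m hm => le_of_not_gt fun hma => (ha m hma.le).not_ge hm⟩

variable [IsProbabilityMeasure μ]

lemma levyMean_eq_sInf_cdf : levyMean μ = sInf {m | 1 / 2 ≤ cdf μ m} := by
  simp only [levyMean, ← ofReal_cdf, ENNReal.ofReal_le_ofReal_iff (cdf_nonneg μ _)]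

lemma half_le_cdf_of_levyMean_lt {m : ℝ} (h : levyMean μ < m) : 1 / 2 ≤ cdf μ m := by
  rw [levyMean_eq_sInf_cdf] at h
  obtain ⟨m', hm', hm'm⟩ := (csInf_lt_iff (bddBelow_cdf_ge_half μ) (nonempty_cdf_ge_half μ)).1 h
  exact hm'.trans (monotone_cdf μ hm'm.le)

lemma cdf_lt_half_of_lt_levyMean {m : ℝ} (h : m < levyMean μ) : cdf μ m < 1 / 2 := by
  rw [levyMean_eq_sInf_cdf] at h
  exact lt_of_not_ge fun hm => h.not_ge (csInf_le (bddBelow_cdf_ge_half μ) hm)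

lemma measure_Ioi_levyMean_le : μ (Ioi (levyMean μ)) ≤ ENNReal.ofReal (1 / 2) := by
  have hcdf : 1 / 2 ≤ cdf μ (levyMean μ) :=
    ge_of_tendsto (((cdf μ).right_continuous _).mono Ioi_subset_Ici_self)
      (eventually_nhdsWithin_of_forall fun _ => half_le_cdf_of_levyMean_lt μ)
  have h := (cdf μ).measure_Ioi (tendsto_cdf_atTop μ) (levyMean μ)
  rw [measure_cdf] at h
  rw [h]
  exact ENNReal.ofReal_le_ofReal (by linarith)

lemma measure_Iio_levyMean_le : μ (Iio (levyMean μ)) ≤ ENNReal.ofReal (1 / 2) := by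
  have h := (cdf μ).measure_Iio (tendsto_cdf_atBot μ) (levyMean μ)
  rw [measure_cdf, sub_zero] at h
  rw [h]
  exact ENNReal.ofReal_le_ofReal <| le_of_tendsto ((monotone_cdf μ).tendsto_leftLim _)
    (eventually_nhdsWithin_of_forall fun _ hm => (cdf_lt_half_of_lt_levyMean μ hm).le)

end LevyMean

section PartialDiam

variable {μ : Measure ℝ} {α : ℝ}

lemma partialDiam_le_ediam {I : Set ℝ} (hI : MeasurableSet I) (hμI : ENNReal.ofReal α ≤ μ I) :
    partialDiam μ α ≤ Metric.ediam I :=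
  iInf₂_le I ⟨hI, hμI⟩

lemma exists_ediam_lt_of_partialDiam_lt {b : ℝ≥0∞} (h : partialDiam μ α < b) :
    ∃ I, MeasurableSet I ∧ ENNReal.ofReal α ≤ μ I ∧ Metric.ediam I < b := by
  simp only [partialDiam, iInf_lt_iff] at h
  obtain ⟨I, ⟨hI, hμI⟩, hIb⟩ := h
  exact ⟨I, hI, hμI, hIb⟩

lemma monotone_partialDiam (μ : Measure ℝ) : Monotone (partialDiam μ) :=
  fun _ _ hαβ => biInf_mono fun _ ⟨hI, hμI⟩ => ⟨hI, (ENNReal.ofReal_le_ofReal hαβ).trans hμI⟩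

lemma partialDiam_le_partialDiam_map {f : ℝ → ℝ} (hf : Measurable f)
    (hf_exp : ∀ x y, edist x y ≤ edist (f x) (f y)) :
    partialDiam μ α ≤ partialDiam (μ.map f) α := by
  refine le_iInf₂ fun I ⟨hI, hμI⟩ => ?_
  rw [Measure.map_apply hf hI] at hμI
  exact (partialDiam_le_ediam (hf hI) hμI).trans <|
    Metric.ediam_le fun x hx y hy => (hf_exp x y).trans (Metric.edist_le_ediam_of_mem hx hy)

end PartialDiam

section Clip

variable {r : ℝ}

lemma continuous_clip (r : ℝ) : Continuous (clip r) := by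
  unfold clip; fun_prop

lemma clip_eq_self_of_ne {t : ℝ} (h₁ : clip r t ≠ -r) (h₂ : clip r t ≠ r) : clip r t = t := by
  unfold clip at *
  grind

lemma preimage_clip_subset {I : Set ℝ} (h₁ : -r ∉ I) (h₂ : r ∉ I) : clip r ⁻¹' I ⊆ I :=
  fun _ ht => clip_eq_self_of_ne (ne_of_mem_of_not_mem ht h₁) (ne_of_mem_of_not_mem ht h₂) ▸ ht

lemma preimage_clip_Ioi_zero (hr : 0 < r) : clip r ⁻¹' Ioi 0 = Ioi 0 := by
  ext t; simp only [clip, mem_preimage, mem_Ioi]; grind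

lemma preimage_clip_Iio_zero (hr : 0 < r) : clip r ⁻¹' Iio 0 = Iio 0 := by
  ext t; simp only [clip, mem_preimage, mem_Iio]; grind

lemma subset_ball_of_ediam_lt {X : Type*} [PseudoMetricSpace X] {a : X} {d : ℝ} {I : Set X}
    (ha : a ∈ I) (hI : Metric.ediam I < ENNReal.ofReal d) : I ⊆ Metric.ball a d := fun _ hx => by
  rw [← Metric.eball_ofReal]
  exact (Metric.edist_le_ediam_of_mem hx ha).trans_lt hI

lemma map_clip_apply_le {ν : Measure ℝ} {I : Set ℝ} (hI : MeasurableSet I)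
    (hdiam : Metric.ediam I < ENNReal.ofReal r) (hIio : ν (Iio 0) < ν.map (clip r) I)
    (hIoi : ν (Ioi 0) < ν.map (clip r) I) : ν.map (clip r) I ≤ ν I := by
  have hr : 0 < r := ENNReal.ofReal_pos.1 (pos_of_gt hdiam)
  rw [Measure.map_apply (continuous_clip r).measurable hI] at *
  have h_neg : -r ∉ I := fun h => hIio.not_ge <| by
    refine (preimage_clip_Iio_zero hr).symm ▸ measure_mono (preimage_mono ?_)
    refine (subset_ball_of_ediam_lt h hdiam).trans ?_
    rw [Real.ball_eq_Ioo]
    exact fun x hx => show x < 0 by linarith [hx.2]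
  have h_pos : r ∉ I := fun h => hIoi.not_ge <| by
    refine (preimage_clip_Ioi_zero hr).symm ▸ measure_mono (preimage_mono ?_)
    refine (subset_ball_of_ediam_lt h hdiam).trans ?_
    rw [Real.ball_eq_Ioo]
    exact fun x hx => show 0 < x by linarith [hx.1]
  exact measure_mono (preimage_clip_subset h_neg h_pos)

theorem partialDiam_le_partialDiam_map_clip {ν : Measure ℝ} {α : ℝ}
    (hIio : ν (Iio 0) < ENNReal.ofReal α) (hIoi : ν (Ioi 0) < ENNReal.ofReal α)
    (hlt : partialDiam (ν.map (clip r)) α < ENNReal.ofReal r) :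
    partialDiam ν α ≤ partialDiam (ν.map (clip r)) α := by
  refine le_of_forall_gt fun b hb => ?_
  obtain ⟨I, hI, hαI, hIb⟩ := exists_ediam_lt_of_partialDiam_lt (lt_min hb hlt)
  have hle := map_clip_apply_le hI (hIb.trans_le (min_le_right _ _))
    (hIio.trans_le hαI) (hIoi.trans_le hαI)
  exact (partialDiam_le_ediam hI (hαI.trans hle)).trans_lt (hIb.trans_le (min_le_left _ _))

end Clip

theorem translations_extractable_general (μ : Measure ℝ) [IsProbabilityMeasure μ]
    (κ ε r : ℝ) (hκ : κ ∈ Set.Ioo (0 : ℝ) (1 / 2)) (hε : 0 < ε) :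
    min (ENNReal.ofReal r) (partialDiam μ (1 - (κ + ε))) ≤
      partialDiam ((μ.map (fun t => t - levyMean μ)).map (clip r)) (1 - κ) +
        ENNReal.ofReal (2 * ε) := by
  set ν := μ.map (fun t => t - levyMean μ)
  have hhalf : ENNReal.ofReal (1 / 2) < ENNReal.ofReal (1 - κ) :=
    (ENNReal.ofReal_lt_ofReal_iff (by linarith [hκ.2])).2 (by linarith [hκ.2])
  have hIio : ν (Iio 0) < ENNReal.ofReal (1 - κ) := by
    rw [Measure.map_apply (measurable_sub_const _) measurableSet_Iio, preimage_sub_const_Iio,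
      zero_add]
    exact (measure_Iio_levyMean_le μ).trans_lt hhalf
  have hIoi : ν (Ioi 0) < ENNReal.ofReal (1 - κ) := by
    rw [Measure.map_apply (measurable_sub_const _) measurableSet_Ioi, preimage_sub_const_Ioi,
      zero_add]
    exact (measure_Ioi_levyMean_le μ).trans_lt hhalf
  rcases le_or_gt (ENNReal.ofReal r) (partialDiam (ν.map (clip r)) (1 - κ)) with h | h
  · exact (min_le_left _ _).trans (h.trans le_self_add)
  calc min (ENNReal.ofReal r) (partialDiam μ (1 - (κ + ε)))
      ≤ partialDiam μ (1 - κ) := (min_le_right _ _).trans (monotone_partialDiam μ (by linarith))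
    _ ≤ partialDiam ν (1 - κ) :=
        partialDiam_le_partialDiam_map (measurable_sub_const _) fun x y => by
          rw [edist_sub_right]
    _ ≤ partialDiam (ν.map (clip r)) (1 - κ) :=
        partialDiam_le_partialDiam_map_clip hIio hIoi h
    _ ≤ _ := le_self_add

theorem translations_extractable (μ : Measure ℝ) [IsProbabilityMeasure μ]
    (κ ε r : ℝ) (hκ : κ ∈ Set.Ioo (0 : ℝ) (1 / 2)) (hε : 0 < ε)
    (hκε : κ + ε < 1 / 2) (hr : 0 < r) :
    min (ENNReal.ofReal r) (partialDiam μ (1 - (κ + ε))) ≤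
      partialDiam ((μ.map (fun t => t - levyMean μ)).map (clip r)) (1 - κ) +
        ENNReal.ofReal (2 * ε) :=
  translations_extractable_general μ κ ε r hκ hε
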